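/- Let q be even and f(x_0,...,x_{m-1}) = (q/2)·Σ_{k=1}^{m-1} x_{π(k-1)} x_{π(k)} + Σ_k c_k x_k + c' where π is a permutation of {0,...,m-1} and c_k, c' ∈ ZMod q. Then the pair of arrays {f, f + (q/2)·x_{π(0)}} from (ZMod 2)^m to ZMod q is a Golay array pair: C_f(τ) + C_{f + (q/2)x_{π(0)}}(τ) = 0 for every nonzero shift τ ∈ {-1,0,1}^m. -/
import Mathlib


open scoped BigOperators

noncomputable def omg (q : ℕ) : ℂ := Complex.exp (2 * Real.pi * Complex.I / q)

noncomputable def ec (q : ℕ) (a : ZMod q) : ℂ := omg q ^ a.val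

/-- Aperiodic auto/cross-correlation of arrays `(ZMod 2)^m → ZMod q` at shift `τ`. -/
noncomputable def acorr (q m : ℕ) (f1 f2 : (Fin m → ZMod 2) → ZMod q) (τ : Fin m → ℤ) : ℂ :=
  ∑ x : Fin m → ZMod 2, ∑ x' : Fin m → ZMod 2,
    if ∀ k, ((x k).val : ℤ) = ((x' k).val : ℤ) + τ k then ec q (f1 x - f2 x') else 0

/-- The standard Golay array
`f(x) = (q/2)·∑_{k=1}^{m-1} x_{π(k-1)} x_{π(k)} + ∑_k c_k x_k + c'`. -/
def stdGolay (q m : ℕ) (π : Equiv.Perm (Fin m)) (c : Fin m → ZMod q) (c' : ZMod q)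
    (x : Fin m → ZMod 2) : ZMod q :=
  ((q / 2 : ℕ) : ZMod q) *
      (∑ k : Fin m,
        if h : (k : ℕ) + 1 < m then
          ((x (π k)).val : ZMod q) * ((x (π ⟨(k : ℕ) + 1, h⟩)).val : ZMod q)
        else 0) +
    (∑ k : Fin m, c k * ((x k).val : ZMod q)) + c'

/- ---------------- auxiliary lemmas ---------------- -/

lemma omg_pow_q {q : ℕ} (hq : 0 < q) : omg q ^ q = 1 := by
  have hq' : (q : ℂ) ≠ 0 := Nat.cast_ne_zero.mpr hq.ne'
  rw [omg, ← Complex.exp_nat_mul]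
  have h : (q : ℂ) * (2 * ↑Real.pi * Complex.I / (q : ℂ)) = 2 * ↑Real.pi * Complex.I := by
    field_simp
  rw [h, Complex.exp_two_pi_mul_I]

lemma omg_pow_mod {q : ℕ} (hq : 0 < q) (n : ℕ) : omg q ^ n = omg q ^ (n % q) := by
  conv_lhs => rw [← Nat.mod_add_div n q]
  rw [pow_add, pow_mul, omg_pow_q hq, one_pow, mul_one]

lemma ec_add {q : ℕ} (hq : 0 < q) (a b : ZMod q) : ec q (a + b) = ec q a * ec q b := by
  haveI : NeZero q := ⟨hq.ne'⟩
  simp only [ec]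
  rw [ZMod.val_add, ← omg_pow_mod hq, pow_add]

lemma ec_half {q : ℕ} (hq : 0 < q) (h2 : 2 ∣ q) : ec q ((q / 2 : ℕ) : ZMod q) = -1 := by
  haveI : NeZero q := ⟨hq.ne'⟩
  have hlt : q / 2 < q := Nat.div_lt_self hq one_lt_two
  simp only [ec]
  rw [ZMod.val_natCast_of_lt hlt]
  obtain ⟨r, rfl⟩ := h2
  have hr : 0 < r := by omega
  have hr' : (r : ℂ) ≠ 0 := Nat.cast_ne_zero.mpr hr.ne'
  rw [Nat.mul_div_cancel_left r two_pos]
  rw [omg, ← Complex.exp_nat_mul]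
  have harg : (r : ℂ) * (2 * ↑Real.pi * Complex.I / ((2 * r : ℕ) : ℂ)) =
      ↑Real.pi * Complex.I := by
    push_cast
    field_simp
  rw [harg, Complex.exp_pi_mul_I]

lemma half_add_half {q : ℕ} (heven : 2 ∣ q) :
    ((q / 2 : ℕ) : ZMod q) + ((q / 2 : ℕ) : ZMod q) = 0 := by
  have h2 : q / 2 + q / 2 = q := by omega
  rw [← Nat.cast_add, h2, ZMod.natCast_self]

lemma zmod2_cases : ∀ a : ZMod 2, a = 0 ∨ a = 1 := by decide

lemma Hmul_ne {q : ℕ} (heven : 2 ∣ q) (a b : ZMod 2) (hab : a ≠ b) :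
    ((q / 2 : ℕ) : ZMod q) * ((a.val : ZMod q) - (b.val : ZMod q)) = ((q / 2 : ℕ) : ZMod q) := by
  have hHH := half_add_half (q := q) heven
  rcases zmod2_cases a with h | h <;> rcases zmod2_cases b with h' | h' <;> subst h <;> subst h'
  · exact absurd rfl hab
  · rw [show ((0 : ZMod 2)).val = 0 from rfl, show ((1 : ZMod 2)).val = 1 from rfl,
      Nat.cast_zero, Nat.cast_one]
    linear_combination -hHH
  · rw [show ((0 : ZMod 2)).val = 0 from rfl, show ((1 : ZMod 2)).val = 1 from rfl,
      Nat.cast_zero, Nat.cast_one]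
    ring
  · exact absurd rfl hab

/- ---------------- the core difference identity ---------------- -/

lemma core_diff {q m : ℕ} (heven : 2 ∣ q) (π : Equiv.Perm (Fin m))
    (c : Fin m → ZMod q) (c' : ZMod q) (x x' : Fin m → ZMod 2) (j pp : Fin m)
    (hpj : (pp : ℕ) + 1 = (j : ℕ))
    (hlt : ∀ i : Fin m, i < j → x (π i) = x' (π i))
    (hne : x (π j) ≠ x' (π j)) :
    stdGolay q m π c c' (Function.update x (π pp) (x (π pp) + 1)) -
      stdGolay q m π c c' (Function.update x' (π pp) (x' (π pp) + 1)) =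
      stdGolay q m π c c' x - stdGolay q m π c c' x' + ((q / 2 : ℕ) : ZMod q) := by
  have hHH := half_add_half (q := q) heven
  have hppj : pp < j := by rw [Fin.lt_def]; omega
  have hxpp : x (π pp) = x' (π pp) := hlt pp hppj
  have hπne : π j ≠ π pp := by
    intro h
    have h2 := π.injective h
    rw [Fin.ext_iff] at h2
    omega
  set Qf : (Fin m → ZMod 2) → ZMod q := fun y =>
    ∑ k : Fin m, if h : (k : ℕ) + 1 < m then
      ((y (π k)).val : ZMod q) * ((y (π ⟨(k : ℕ) + 1, h⟩)).val : ZMod q) else 0 with hQf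
  set Lf : (Fin m → ZMod 2) → ZMod q := fun y => ∑ k : Fin m, c k * ((y k).val : ZMod q) with hLf
  have key : ∀ y, stdGolay q m π c c' y = ((q / 2 : ℕ) : ZMod q) * Qf y + Lf y + c' :=
    fun y => rfl
  simp only [key]
  have hLeq : Lf (Function.update x (π pp) (x (π pp) + 1)) -
      Lf (Function.update x' (π pp) (x' (π pp) + 1)) = Lf x - Lf x' := by
    simp only [hLf]
    rw [← Finset.sum_sub_distrib, ← Finset.sum_sub_distrib]
    refine Finset.sum_congr rfl fun k _ => ?_
    by_cases hk : k = π pp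
    · subst hk
      rw [Function.update_self, Function.update_self, hxpp]
      ring
    · rw [Function.update_of_ne hk, Function.update_of_ne hk]
  have hQeq : Qf (Function.update x (π pp) (x (π pp) + 1)) -
      Qf (Function.update x' (π pp) (x' (π pp) + 1)) - Qf x + Qf x' =
      ((((x (π pp) + 1)).val : ZMod q) - (((x (π pp))).val : ZMod q)) *
        ((((x (π j))).val : ZMod q) - (((x' (π j))).val : ZMod q)) := by
    simp only [hQf]
    rw [← Finset.sum_sub_distrib, ← Finset.sum_sub_distrib, ← Finset.sum_add_distrib]
    rw [Finset.sum_eq_single pp]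
    · have hm1 : (pp : ℕ) + 1 < m := by have := j.isLt; omega
      simp only [dif_pos hm1]
      have hj' : (⟨(pp : ℕ) + 1, hm1⟩ : Fin m) = j := by
        rw [Fin.ext_iff]; exact hpj
      rw [hj']
      simp only [Function.update_self, Function.update_of_ne hπne]
      rw [← hxpp]
      ring
    · intro k _ hk
      by_cases hm1 : (k : ℕ) + 1 < m
      · simp only [dif_pos hm1]
        have hk1 : π k ≠ π pp := fun h => hk (π.injective h)
        by_cases hk2 : (⟨(k : ℕ) + 1, hm1⟩ : Fin m) = pp
        · have h2 : (k : ℕ) + 1 = (pp : ℕ) := by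
            rw [Fin.ext_iff] at hk2; exact hk2
          have hkj : k < j := by rw [Fin.lt_def]; omega
          have e1 : x (π k) = x' (π k) := hlt k hkj
          rw [hk2]
          simp only [Function.update_of_ne hk1, Function.update_self]
          rw [e1, hxpp]
          ring
        · have hk3 : π (⟨(k : ℕ) + 1, hm1⟩ : Fin m) ≠ π pp := fun h => hk2 (π.injective h)
          simp only [Function.update_of_ne hk1, Function.update_of_ne hk3]
          ring
      · simp only [dif_neg hm1]; ring
    · intro h; exact absurd (Finset.mem_univ pp) h
  have hfin : ((q / 2 : ℕ) : ZMod q) *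
      (Qf (Function.update x (π pp) (x (π pp) + 1)) -
        Qf (Function.update x' (π pp) (x' (π pp) + 1)) - Qf x + Qf x') =
      ((q / 2 : ℕ) : ZMod q) := by
    rw [hQeq]
    rcases zmod2_cases (x (π pp)) with h1 | h1 <;>
      rcases zmod2_cases (x (π j)) with h2 | h2 <;>
        rcases zmod2_cases (x' (π j)) with h3 | h3
    all_goals
      have V0 : (((0 : ZMod 2)).val : ZMod q) = 0 := by
        rw [show ((0 : ZMod 2)).val = 0 from rfl, Nat.cast_zero]
      have V1 : (((1 : ZMod 2)).val : ZMod q) = 1 := by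
        rw [show ((1 : ZMod 2)).val = 1 from rfl, Nat.cast_one]
      have W0 : ((((0 : ZMod 2)) + 1).val : ZMod q) = 1 := by
        rw [show (((0 : ZMod 2)) + 1).val = 1 from rfl, Nat.cast_one]
      have W1 : ((((1 : ZMod 2)) + 1).val : ZMod q) = 0 := by
        rw [show (((1 : ZMod 2)) + 1).val = 0 from rfl, Nat.cast_zero]
      first
      | exact absurd (h2.trans h3.symm) hne
      | (rw [h1, h2, h3]
         simp only [V0, V1, W0, W1]
         first
         | ring1
         | linear_combination -hHH)
  linear_combination hLeq + hfin

/- ---------------- the involution ---------------- -/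

def gpDset {m : ℕ} (π : Equiv.Perm (Fin m))
    (p : (Fin m → ZMod 2) × (Fin m → ZMod 2)) : Finset (Fin m) :=
  Finset.univ.filter fun i => p.1 (π i) ≠ p.2 (π i)

def ppOf {m : ℕ} (π : Equiv.Perm (Fin m)) (p : (Fin m → ZMod 2) × (Fin m → ZMod 2))
    (h : (gpDset π p).Nonempty) : Fin m :=
  ⟨(((gpDset π p).min' h) : ℕ) - 1, lt_of_le_of_lt (Nat.sub_le _ _) (Fin.is_lt _)⟩

noncomputable def gpFlip {m : ℕ} (π : Equiv.Perm (Fin m)) (hm : 0 < m)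
    (p : (Fin m → ZMod 2) × (Fin m → ZMod 2)) : (Fin m → ZMod 2) × (Fin m → ZMod 2) :=
  if h : p.1 (π ⟨0, hm⟩) = p.2 (π ⟨0, hm⟩) ∧ (gpDset π p).Nonempty then
    (Function.update p.1 (π (ppOf π p h.2)) (p.1 (π (ppOf π p h.2)) + 1),
      Function.update p.2 (π (ppOf π p h.2)) (p.2 (π (ppOf π p h.2)) + 1))
  else p

lemma gpFlip_spec {m : ℕ} (π : Equiv.Perm (Fin m)) (hm : 0 < m)
    (p : (Fin m → ZMod 2) × (Fin m → ZMod 2))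
    (h : p.1 (π ⟨0, hm⟩) = p.2 (π ⟨0, hm⟩) ∧ (gpDset π p).Nonempty) :
    ((ppOf π p h.2 : ℕ) + 1 = (((gpDset π p).min' h.2) : ℕ)) ∧
      p.1 (π ((gpDset π p).min' h.2)) ≠ p.2 (π ((gpDset π p).min' h.2)) ∧
      (∀ i : Fin m, i < (gpDset π p).min' h.2 → p.1 (π i) = p.2 (π i)) ∧
      gpFlip π hm p =
        (Function.update p.1 (π (ppOf π p h.2)) (p.1 (π (ppOf π p h.2)) + 1),
          Function.update p.2 (π (ppOf π p h.2)) (p.2 (π (ppOf π p h.2)) + 1)) := by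
  have hjmem : (gpDset π p).min' h.2 ∈ gpDset π p := Finset.min'_mem _ _
  have hjne : p.1 (π ((gpDset π p).min' h.2)) ≠ p.2 (π ((gpDset π p).min' h.2)) := by
    have := hjmem
    simp only [gpDset, Finset.mem_filter] at this
    exact this.2
  have h0 : (⟨0, hm⟩ : Fin m) ∉ gpDset π p := by
    simp [gpDset, h.1]
  have hj1 : 0 < (((gpDset π p).min' h.2) : ℕ) := by
    by_contra hc
    push_neg at hc
    have hz : (gpDset π p).min' h.2 = (⟨0, hm⟩ : Fin m) :=
      Fin.ext (show (((gpDset π p).min' h.2) : ℕ) = 0 by omega)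
    rw [hz] at hjmem
    exact h0 hjmem
  refine ⟨?_, hjne, ?_, ?_⟩
  · show (((gpDset π p).min' h.2 : ℕ) - 1) + 1 = _
    omega
  · intro i hi
    by_contra hc
    have hmem : i ∈ gpDset π p := by simp [gpDset, hc]
    have := Finset.min'_le _ i hmem
    exact absurd this (not_le.mpr hi)
  · unfold gpFlip
    rw [dif_pos h]

lemma gpDset_flip {m : ℕ} (π : Equiv.Perm (Fin m)) (hm : 0 < m)
    (p : (Fin m → ZMod 2) × (Fin m → ZMod 2))
    (h : p.1 (π ⟨0, hm⟩) = p.2 (π ⟨0, hm⟩) ∧ (gpDset π p).Nonempty) :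
    gpDset π (gpFlip π hm p) = gpDset π p := by
  obtain ⟨hpj, hne, hlt, hflip⟩ := gpFlip_spec π hm p h
  have hagree : p.1 (π (ppOf π p h.2)) = p.2 (π (ppOf π p h.2)) :=
    hlt _ (by rw [Fin.lt_def]; omega)
  rw [hflip]
  ext i
  simp only [gpDset, Finset.mem_filter, Finset.mem_univ, true_and]
  by_cases hi : i = ppOf π p h.2
  · subst hi
    simp [Function.update_self, hagree]
  · have hπ : π i ≠ π (ppOf π p h.2) := fun hh => hi (π.injective hh)
    simp [Function.update_of_ne hπ]

lemma gpGuard_flip {m : ℕ} (π : Equiv.Perm (Fin m)) (hm : 0 < m)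
    (p : (Fin m → ZMod 2) × (Fin m → ZMod 2))
    (h : p.1 (π ⟨0, hm⟩) = p.2 (π ⟨0, hm⟩) ∧ (gpDset π p).Nonempty) :
    (gpFlip π hm p).1 (π ⟨0, hm⟩) = (gpFlip π hm p).2 (π ⟨0, hm⟩) ∧
      (gpDset π (gpFlip π hm p)).Nonempty := by
  obtain ⟨hpj, hne, hlt, hflip⟩ := gpFlip_spec π hm p h
  constructor
  · rw [hflip]
    dsimp only
    by_cases h0 : π ⟨0, hm⟩ = π (ppOf π p h.2)
    · rw [← h0, Function.update_self, Function.update_self, h.1]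
    · rw [Function.update_of_ne h0, Function.update_of_ne h0]
      exact h.1
  · rw [gpDset_flip π hm p h]
    exact h.2

lemma gpFlip_invol {m : ℕ} (π : Equiv.Perm (Fin m)) (hm : 0 < m)
    (p : (Fin m → ZMod 2) × (Fin m → ZMod 2)) : gpFlip π hm (gpFlip π hm p) = p := by
  by_cases h : p.1 (π ⟨0, hm⟩) = p.2 (π ⟨0, hm⟩) ∧ (gpDset π p).Nonempty
  · have h' := gpGuard_flip π hm p h
    obtain ⟨hpj, hne, hlt, hflip⟩ := gpFlip_spec π hm p h
    obtain ⟨hpj2, hne2, hlt2, hflip2⟩ := gpFlip_spec π hm (gpFlip π hm p) h'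
    have hdeq : gpDset π (gpFlip π hm p) = gpDset π p := gpDset_flip π hm p h
    have hmin : (gpDset π (gpFlip π hm p)).min' h'.2 = (gpDset π p).min' h.2 := by
      apply le_antisymm
      · exact Finset.min'_le _ _ (by rw [hdeq]; exact Finset.min'_mem _ _)
      · refine Finset.min'_le _ _ ?_
        rw [← hdeq]
        exact Finset.min'_mem _ _
    have hppeq : ppOf π (gpFlip π hm p) h'.2 = ppOf π p h.2 := by
      simp only [ppOf, Fin.ext_iff, hmin]
    rw [hflip2, hppeq, hflip]
    dsimp only
    have h2 : ∀ z : ZMod 2, z + 1 + 1 = z := by decide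
    refine Prod.ext ?_ ?_ <;> dsimp only <;>
      rw [Function.update_self, Function.update_idem, h2, Function.update_eq_self]
  · have hflip : gpFlip π hm p = p := by unfold gpFlip; rw [dif_neg h]
    rw [hflip, hflip]

/- ---------------- main theorem ---------------- -/

/-- `{f, f + (q/2)·x_{π(0)}}` is a Golay array pair. -/
theorem stmt14 (q m : ℕ) (hq : 0 < q) (heven : 2 ∣ q) (hm : 0 < m)
    (π : Equiv.Perm (Fin m)) (c : Fin m → ZMod q) (c' : ZMod q) :
    ∀ τ : Fin m → ℤ, (∀ k, τ k = -1 ∨ τ k = 0 ∨ τ k = 1) → τ ≠ 0 →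
      acorr q m (stdGolay q m π c c') (stdGolay q m π c c') τ +
        acorr q m
          (fun x => stdGolay q m π c c' x +
            ((q / 2 : ℕ) : ZMod q) * ((x (π ⟨0, hm⟩)).val : ZMod q))
          (fun x => stdGolay q m π c c' x +
            ((q / 2 : ℕ) : ZMod q) * ((x (π ⟨0, hm⟩)).val : ZMod q)) τ = 0 := by
  classical
  intro τ hτ hτ0
  simp only [acorr]
  rw [← Finset.sum_add_distrib]
  simp only [← Finset.sum_add_distrib]
  rw [← Finset.sum_product']
  have hF0 : ∀ p : (Fin m → ZMod 2) × (Fin m → ZMod 2),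
      ¬(p.1 (π ⟨0, hm⟩) = p.2 (π ⟨0, hm⟩) ∧ (gpDset π p).Nonempty) →
      ((if ∀ k, ((p.1 k).val : ℤ) = ((p.2 k).val : ℤ) + τ k then
          ec q (stdGolay q m π c c' p.1 - stdGolay q m π c c' p.2) else 0) +
        (if ∀ k, ((p.1 k).val : ℤ) = ((p.2 k).val : ℤ) + τ k then
          ec q ((stdGolay q m π c c' p.1 +
              ((q / 2 : ℕ) : ZMod q) * ((p.1 (π ⟨0, hm⟩)).val : ZMod q)) -
            (stdGolay q m π c c' p.2 +
              ((q / 2 : ℕ) : ZMod q) * ((p.2 (π ⟨0, hm⟩)).val : ZMod q))) else 0)) = 0 := by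
    intro p hG
    by_cases hP : ∀ k, ((p.1 k).val : ℤ) = ((p.2 k).val : ℤ) + τ k
    · rcases not_and_or.mp hG with hna | hnon
      · rw [if_pos hP, if_pos hP]
        have e2 : (stdGolay q m π c c' p.1 +
              ((q / 2 : ℕ) : ZMod q) * ((p.1 (π ⟨0, hm⟩)).val : ZMod q)) -
            (stdGolay q m π c c' p.2 +
              ((q / 2 : ℕ) : ZMod q) * ((p.2 (π ⟨0, hm⟩)).val : ZMod q)) =
            (stdGolay q m π c c' p.1 - stdGolay q m π c c' p.2) + ((q / 2 : ℕ) : ZMod q) := by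
          have h3 := Hmul_ne (q := q) heven _ _ hna
          linear_combination h3
        rw [e2, ec_add hq, ec_half hq heven]
        ring
      · exfalso
        rw [Finset.not_nonempty_iff_eq_empty] at hnon
        apply hτ0
        funext k
        have h1 : p.1 k = p.2 k := by
          by_contra hc
          have hmem : π.symm k ∈ gpDset π p := by
            simp [gpDset, hc]
          rw [hnon] at hmem
          exact absurd hmem (Finset.notMem_empty _)
        have h2 := hP k
        rw [h1] at h2
        have : τ k = 0 := by omega
        simpa using this
    · rw [if_neg hP, if_neg hP]
      norm_num
  refine Finset.sum_ninvolution (gpFlip π hm) ?_ ?_ (fun p => by simp) (gpFlip_invol π hm)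
  · intro p
    by_cases hG : p.1 (π ⟨0, hm⟩) = p.2 (π ⟨0, hm⟩) ∧ (gpDset π p).Nonempty
    · obtain ⟨hpj, hne, hlt, hflip⟩ := gpFlip_spec π hm p hG
      have hagree_pp : p.1 (π (ppOf π p hG.2)) = p.2 (π (ppOf π p hG.2)) :=
        hlt _ (by rw [Fin.lt_def]; omega)
      rw [hflip]
      dsimp only
      by_cases hP : ∀ k, ((p.1 k).val : ℤ) = ((p.2 k).val : ℤ) + τ k
      · have hP2 : ∀ k,
            (((Function.update p.1 (π (ppOf π p hG.2)) (p.1 (π (ppOf π p hG.2)) + 1)) k).val : ℤ) =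
            (((Function.update p.2 (π (ppOf π p hG.2)) (p.2 (π (ppOf π p hG.2)) + 1)) k).val : ℤ)
              + τ k := by
          intro k
          by_cases hk : k = π (ppOf π p hG.2)
          · subst hk
            rw [Function.update_self, Function.update_self, hagree_pp]
            have hh := hP (π (ppOf π p hG.2))
            rw [hagree_pp] at hh
            omega
          · rw [Function.update_of_ne hk, Function.update_of_ne hk]
            exact hP k
        rw [if_pos hP, if_pos hP, if_pos hP2, if_pos hP2]
        have hagree0 :
            (Function.update p.1 (π (ppOf π p hG.2)) (p.1 (π (ppOf π p hG.2)) + 1)) (π ⟨0, hm⟩) =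
            (Function.update p.2 (π (ppOf π p hG.2)) (p.2 (π (ppOf π p hG.2)) + 1)) (π ⟨0, hm⟩) := by
          by_cases h0 : π ⟨0, hm⟩ = π (ppOf π p hG.2)
          · rw [← h0, Function.update_self, Function.update_self, hG.1]
          · rw [Function.update_of_ne h0, Function.update_of_ne h0, hG.1]
        have e1 : (stdGolay q m π c c' p.1 +
              ((q / 2 : ℕ) : ZMod q) * ((p.1 (π ⟨0, hm⟩)).val : ZMod q)) -
            (stdGolay q m π c c' p.2 +
              ((q / 2 : ℕ) : ZMod q) * ((p.2 (π ⟨0, hm⟩)).val : ZMod q)) =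
            stdGolay q m π c c' p.1 - stdGolay q m π c c' p.2 := by
          rw [hG.1]; ring
        have e2 : (stdGolay q m π c c'
              (Function.update p.1 (π (ppOf π p hG.2)) (p.1 (π (ppOf π p hG.2)) + 1)) +
              ((q / 2 : ℕ) : ZMod q) *
                (((Function.update p.1 (π (ppOf π p hG.2)) (p.1 (π (ppOf π p hG.2)) + 1))
                  (π ⟨0, hm⟩)).val : ZMod q)) -
            (stdGolay q m π c c'
              (Function.update p.2 (π (ppOf π p hG.2)) (p.2 (π (ppOf π p hG.2)) + 1)) +
              ((q / 2 : ℕ) : ZMod q) *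
                (((Function.update p.2 (π (ppOf π p hG.2)) (p.2 (π (ppOf π p hG.2)) + 1))
                  (π ⟨0, hm⟩)).val : ZMod q)) =
            stdGolay q m π c c'
                (Function.update p.1 (π (ppOf π p hG.2)) (p.1 (π (ppOf π p hG.2)) + 1)) -
              stdGolay q m π c c'
                (Function.update p.2 (π (ppOf π p hG.2)) (p.2 (π (ppOf π p hG.2)) + 1)) := by
          rw [hagree0]; ring
        have hcore := core_diff (q := q) heven π c c' p.1 p.2 _ _ hpj hlt hne
        rw [e1, e2, hcore, ec_add hq, ec_half hq heven]
        ring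
      · have hP2 : ¬(∀ k,
            (((Function.update p.1 (π (ppOf π p hG.2)) (p.1 (π (ppOf π p hG.2)) + 1)) k).val : ℤ) =
            (((Function.update p.2 (π (ppOf π p hG.2)) (p.2 (π (ppOf π p hG.2)) + 1)) k).val : ℤ)
              + τ k) := by
          intro hh
          apply hP
          intro k
          by_cases hk : k = π (ppOf π p hG.2)
          · subst hk
            have h2 := hh (π (ppOf π p hG.2))
            rw [Function.update_self, Function.update_self, hagree_pp] at h2
            rw [hagree_pp]
            omega
          · have := hh k
            rwa [Function.update_of_ne hk, Function.update_of_ne hk] at this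
        rw [if_neg hP, if_neg hP, if_neg hP2, if_neg hP2]
        norm_num
    · have hflip : gpFlip π hm p = p := by unfold gpFlip; rw [dif_neg hG]
      rw [hflip, hF0 p hG]
      norm_num
  · intro p hne0
    by_cases hG : p.1 (π ⟨0, hm⟩) = p.2 (π ⟨0, hm⟩) ∧ (gpDset π p).Nonempty
    · obtain ⟨hpj, hne, hlt, hflip⟩ := gpFlip_spec π hm p hG
      rw [hflip]
      intro hEq
      have h1 := congrArg (fun z : (Fin m → ZMod 2) × (Fin m → ZMod 2) =>
        z.1 (π (ppOf π p hG.2))) hEq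
      simp only [Function.update_self] at h1
      exact (by decide : ∀ a : ZMod 2, ¬(a + 1 = a)) _ h1
    · exact absurd (hF0 p hG) hne0
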